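/- arXiv:2104.00602 — 4 statements merged into one kernel-verified Lean document; each statement's English description precedes it below -/
import Mathlib

section
/- Let p be a prime and let r1 and r2 be distinct integers with 0 ≤ r1, r2 ≤ p−1. Suppose C is a covering system of the integers such that the congruence x ≡ r1 (mod p) belongs to C and the congruence x ≡ r2 (mod p) does not belong to C. Then there exists a covering system C' of the integers whose multiset of moduli equals the multiset of moduli of C, such that x ≡ r2 (mod p) belongs to C', x ≡ r1 (mod p) does not belong to C', and moreover for every integer r with r ≢ r1 (mod p), if x ≡ r (mod p) belongs to C then x ≡ r (mod p) belongs to C'. -/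
/-!
Choose `t ≡ r₂ - r₁ (mod p)` divisible by every modulus of `C` prime to `p`, and let `σ` be the
involution of `ℤ` that adds `t` on the class `r₁ (mod p)`, subtracts it on the class `r₂ (mod p)`
and fixes everything else. For every modulus `m` of `C`, `σ` respects congruences modulo `m`:
when `p ∣ m` since `σ` is a translation on each class mod `p`, and otherwise since `m ∣ t` gives
`σ x ≡ x (mod m)`. Hence replacing each congruence `x ≡ a (mod m)` by `x ≡ σ a (mod m)` covers
`σ ℤ = ℤ`, and it exchanges the two classes mod `p`.
-/

/-- A covering system of the integers: a finite list of congruences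
`x ≡ r (mod m)` (encoded as pairs `(r, m)`) with positive moduli such that
every integer satisfies at least one congruence in the list. -/
def IsCoveringSystem (C : List (ℤ × ℕ)) : Prop :=
  (∀ c ∈ C, 0 < c.2) ∧ ∀ n : ℤ, ∃ c ∈ C, n ≡ c.1 [ZMOD (c.2 : ℤ)]

/-- The congruence `x ≡ r (mod m)` belongs to the system `C`, where congruences
with the same modulus are identified up to residue equivalence. -/
def MemCong (C : List (ℤ × ℕ)) (r : ℤ) (m : ℕ) : Prop :=
  ∃ c ∈ C, c.2 = m ∧ c.1 ≡ r [ZMOD (m : ℤ)]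

theorem Nat.exists_coprime_forall_dvd (L : List ℕ) (p : ℕ) :
    ∃ Q : ℕ, Q.Coprime p ∧ ∀ m ∈ L, m.Coprime p → m ∣ Q := by
  refine ⟨(L.filter (·.Coprime p)).prod, Nat.coprime_list_prod_left_iff.2 fun m hm => ?_,
    fun m hm hmp => List.dvd_prod (List.mem_filter.2 ⟨hm, by simpa using hmp⟩)⟩
  simpa using (List.mem_filter.1 hm).2

theorem Int.exists_dvd_and_modEq {q p : ℤ} (h : IsCoprime q p) (d : ℤ) :
    ∃ t, q ∣ t ∧ t ≡ d [ZMOD p] := by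
  obtain ⟨u, v, huv⟩ := h
  refine ⟨d * u * q, dvd_mul_left q _, Int.modEq_iff_dvd.2 ⟨d * v, ?_⟩⟩
  linear_combination -d * huv

section ClassSwap

variable (p r₁ r₂ t : ℤ)

def classSwap (x : ℤ) : ℤ :=
  if x ≡ r₁ [ZMOD p] then x + t else if x ≡ r₂ [ZMOD p] then x - t else x

variable {p r₁ r₂ t} {x : ℤ}

theorem classSwap_of_modEq_left (h : x ≡ r₁ [ZMOD p]) : classSwap p r₁ r₂ t x = x + t :=
  if_pos h

theorem classSwap_of_modEq_right (h₁ : ¬x ≡ r₁ [ZMOD p]) (h₂ : x ≡ r₂ [ZMOD p]) :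
    classSwap p r₁ r₂ t x = x - t := by
  rw [classSwap, if_neg h₁, if_pos h₂]

theorem classSwap_of_not_modEq (h₁ : ¬x ≡ r₁ [ZMOD p]) (h₂ : ¬x ≡ r₂ [ZMOD p]) :
    classSwap p r₁ r₂ t x = x := by
  rw [classSwap, if_neg h₁, if_neg h₂]

theorem classSwap_modEq_of_modEq_left (ht : t ≡ r₂ - r₁ [ZMOD p]) (h : x ≡ r₁ [ZMOD p]) :
    classSwap p r₁ r₂ t x ≡ r₂ [ZMOD p] := by
  rw [classSwap_of_modEq_left h]
  simpa using h.add ht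

theorem classSwap_modEq_of_modEq_right (ht : t ≡ r₂ - r₁ [ZMOD p])
    (h₁₂ : ¬r₁ ≡ r₂ [ZMOD p]) (h : x ≡ r₂ [ZMOD p]) : classSwap p r₁ r₂ t x ≡ r₁ [ZMOD p] := by
  rw [classSwap_of_modEq_right (fun h' => h₁₂ (h'.symm.trans h)) h]
  simpa using h.sub ht

theorem classSwap_involutive (ht : t ≡ r₂ - r₁ [ZMOD p]) (h₁₂ : ¬r₁ ≡ r₂ [ZMOD p]) :
    Function.Involutive (classSwap p r₁ r₂ t) := by
  intro x
  by_cases h₁ : x ≡ r₁ [ZMOD p]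
  · have hσ := classSwap_modEq_of_modEq_left (r₂ := r₂) ht h₁
    rw [classSwap_of_modEq_right (fun h => h₁₂ (h.symm.trans hσ)) hσ,
      classSwap_of_modEq_left h₁, add_sub_cancel_right]
  by_cases h₂ : x ≡ r₂ [ZMOD p]
  · rw [classSwap_of_modEq_left (classSwap_modEq_of_modEq_right ht h₁₂ h₂),
      classSwap_of_modEq_right h₁ h₂, sub_add_cancel]
  · rw [classSwap_of_not_modEq h₁ h₂, classSwap_of_not_modEq h₁ h₂]

theorem classSwap_modEq_self_of_dvd {m : ℤ} (hm : m ∣ t) (x : ℤ) :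
    classSwap p r₁ r₂ t x ≡ x [ZMOD m] := by
  have ht : t ≡ 0 [ZMOD m] := (Int.modEq_zero_iff_dvd.2 hm)
  unfold classSwap
  split_ifs
  · simpa using (Int.ModEq.refl x).add ht
  · simpa using (Int.ModEq.refl x).sub ht
  · rfl

theorem classSwap_congr_of_dvd {m y : ℤ} (hm : p ∣ m) (h : x ≡ y [ZMOD m]) :
    classSwap p r₁ r₂ t x ≡ classSwap p r₁ r₂ t y [ZMOD m] := by
  have hp : x ≡ y [ZMOD p] := h.of_dvd hm
  have hr : ∀ r, x ≡ r [ZMOD p] ↔ y ≡ r [ZMOD p] := fun r => ⟨hp.symm.trans, hp.trans⟩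
  simp only [classSwap, hr]
  split_ifs
  exacts [h.add_right t, h.sub_right t, h]

end ClassSwap

section ResidueMap

variable {C : List (ℤ × ℕ)} {σ : ℤ → ℤ}

theorem memCong_congr {r r' : ℤ} {m : ℕ} (h : r ≡ r' [ZMOD m]) :
    MemCong C r m ↔ MemCong C r' m := by
  refine exists_congr fun c => and_congr_right fun _ => and_congr_right fun _ => ?_
  exact ⟨(·.trans h), (·.trans h.symm)⟩

theorem IsCoveringSystem.map_residues (hC : IsCoveringSystem C) (hσ : Function.Surjective σ)
    (hσC : ∀ c ∈ C, ∀ x y, x ≡ y [ZMOD c.2] → σ x ≡ σ y [ZMOD c.2]) :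
    IsCoveringSystem (C.map (Prod.map σ id)) := by
  refine ⟨fun c hc => ?_, fun n => ?_⟩
  · obtain ⟨c, hc₀, rfl⟩ := List.mem_map.1 hc
    exact hC.1 c hc₀
  · obtain ⟨y, rfl⟩ := hσ n
    obtain ⟨c, hc, hyc⟩ := hC.2 y
    exact ⟨Prod.map σ id c, List.mem_map_of_mem hc, hσC c hc y c.1 hyc⟩

theorem memCong_map_iff (hσ : Function.Involutive σ) {m : ℕ}
    (hσm : ∀ x y, x ≡ y [ZMOD m] → σ x ≡ σ y [ZMOD m]) (r : ℤ) :
    MemCong (C.map (Prod.map σ id)) r m ↔ MemCong C (σ r) m := by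
  constructor
  · rintro ⟨c', hc', rfl, hcr⟩
    obtain ⟨c, hc, rfl⟩ := List.mem_map.1 hc'
    exact ⟨c, hc, rfl, hσ c.1 ▸ hσm _ _ hcr⟩
  · rintro ⟨c, hc, rfl, hcr⟩
    exact ⟨Prod.map σ id c, List.mem_map_of_mem hc, rfl, hσ r ▸ hσm _ _ hcr⟩

end ResidueMap

theorem stmt0 (p : ℕ) (hp : p.Prime) (r1 r2 : ℤ)
    (hr1 : 0 ≤ r1 ∧ r1 ≤ (p : ℤ) - 1) (hr2 : 0 ≤ r2 ∧ r2 ≤ (p : ℤ) - 1)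
    (hne : r1 ≠ r2)
    (C : List (ℤ × ℕ)) (hC : IsCoveringSystem C)
    (hmem : MemCong C r1 p) (hnmem : ¬ MemCong C r2 p) :
    ∃ C' : List (ℤ × ℕ),
      IsCoveringSystem C' ∧
      (↑(C'.map Prod.snd) : Multiset ℕ) = ↑(C.map Prod.snd) ∧
      MemCong C' r2 p ∧ ¬ MemCong C' r1 p ∧
      ∀ r : ℤ, ¬ r ≡ r1 [ZMOD (p : ℤ)] → MemCong C r p → MemCong C' r p := by
  have h₁₂ : ¬r1 ≡ r2 [ZMOD p] := fun h => hne <| by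
    rwa [Int.ModEq, Int.emod_eq_of_lt hr1.1 (by omega), Int.emod_eq_of_lt hr2.1 (by omega)] at h
  obtain ⟨Q, hQp, hQ⟩ := Nat.exists_coprime_forall_dvd (C.map Prod.snd) p
  obtain ⟨t, hQt, ht⟩ := Int.exists_dvd_and_modEq (Nat.isCoprime_iff_coprime.2 hQp) (r2 - r1)
  set σ := classSwap p r1 r2 t
  have hσ : Function.Involutive σ := classSwap_involutive ht h₁₂
  have hσC : ∀ c ∈ C, ∀ x y, x ≡ y [ZMOD c.2] → σ x ≡ σ y [ZMOD c.2] := by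
    intro c hc x y hxy
    by_cases hpc : p ∣ c.2
    · exact classSwap_congr_of_dvd (Int.natCast_dvd_natCast.2 hpc) hxy
    have hcQ : c.2 ∣ Q :=
      hQ c.2 (List.mem_map_of_mem hc) (Nat.coprime_comm.1 (hp.coprime_iff_not_dvd.2 hpc))
    have hct : (c.2 : ℤ) ∣ t := (Int.natCast_dvd_natCast.2 hcQ).trans hQt
    exact (classSwap_modEq_self_of_dvd hct x).trans
      (hxy.trans (classSwap_modEq_self_of_dvd hct y).symm)
  have hσp := memCong_map_iff (C := C) hσ fun x y => classSwap_congr_of_dvd dvd_rfl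
  refine ⟨C.map (Prod.map σ id), hC.map_residues hσ.surjective hσC,
    by rw [List.map_map]; rfl, ?_, ?_, fun r hr hrC => ?_⟩
  · exact (hσp r2).2 ((memCong_congr (classSwap_modEq_of_modEq_right ht h₁₂ rfl)).2 hmem)
  · exact fun h => hnmem ((memCong_congr (classSwap_modEq_of_modEq_left ht rfl)).1 ((hσp r1).1 h))
  · by_cases hr2 : r ≡ r2 [ZMOD p]
    · exact absurd ((memCong_congr hr2).1 hrC) hnmem
    · rwa [hσp, show σ r = r from classSwap_of_not_modEq hr hr2]
end

section
/- Let p be an odd prime and let ξ be an integer with 2 ≤ ξ ≤ p−1. Suppose the following finite list of congruences is a covering system of the integers: the two congruences x ≡ 0 (mod p) and x ≡ 1 (mod p); congruences x ≡ r_j (mod m_j) for 1 ≤ j ≤ k, where p does not divide m_j; and, for each η with 2 ≤ η ≤ p−1, congruences x ≡ r_{η,j} (mod p·m_{η,j}) for 1 ≤ j ≤ ℓ_η, where p does not divide m_{η,j} and r_{η,j} ≡ η (mod p). Then the finite list of congruences consisting of x ≡ r_j (mod m_j) for 1 ≤ j ≤ k together with x ≡ r_{ξ,j} (mod m_{ξ,j})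 for 1 ≤ j ≤ ℓ_ξ is itself a covering system of the integers. -/
theorem stmt2 (p : ℕ) (hp : p.Prime) (hodd : Odd p)
    (ξ : ℕ) (hξ₂ : 2 ≤ ξ) (hξp : ξ ≤ p - 1)
    (k : ℕ) (r : Fin k → ℤ) (m : Fin k → ℕ)
    (hm : ∀ j : Fin k, 0 < m j ∧ ¬ (p ∣ m j))
    (ℓ : ℕ → ℕ) (r' : ℕ → ℕ → ℤ) (m' : ℕ → ℕ → ℕ)
    (hm' : ∀ η, 2 ≤ η → η ≤ p - 1 → ∀ j < ℓ η,
      0 < m' η j ∧ ¬ (p ∣ m' η j) ∧ r' η j ≡ (η : ℤ) [ZMOD (p : ℤ)])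
    (hcover : ∀ n : ℤ,
      n ≡ 0 [ZMOD (p : ℤ)] ∨ n ≡ 1 [ZMOD (p : ℤ)] ∨
      (∃ j : Fin k, n ≡ r j [ZMOD (m j : ℤ)]) ∨
      (∃ η, 2 ≤ η ∧ η ≤ p - 1 ∧
        ∃ j < ℓ η, n ≡ r' η j [ZMOD ((p * m' η j : ℕ) : ℤ)])) :
    ∀ n : ℤ,
      (∃ j : Fin k, n ≡ r j [ZMOD (m j : ℤ)]) ∨
      (∃ j < ℓ ξ, n ≡ r' ξ j [ZMOD (m' ξ j : ℤ)]) := by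
  intro n
  have hp2 : 2 ≤ p := hp.two_le
  have hξltp : ξ < p := by omega
  -- the combined modulus coprime to p
  set L : ℕ := (∏ j : Fin k, m j) * (∏ j ∈ Finset.range (ℓ ξ), m' ξ j) with hL
  have hpL : ¬ (p ∣ L) := by
    intro h
    rcases (Nat.Prime.dvd_mul hp).mp h with h1 | h2
    · rcases (hp.prime.dvd_finset_prod_iff _).mp h1 with ⟨j, _, hj⟩
      exact (hm j).2 hj
    · rcases (hp.prime.dvd_finset_prod_iff _).mp h2 with ⟨j, hjmem, hj⟩
      exact (hm' ξ hξ₂ hξp j (Finset.mem_range.mp hjmem)).2.1 hj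
  have hcop : IsCoprime (p : ℤ) (L : ℤ) := by
    rw [Int.isCoprime_iff_gcd_eq_one]
    simpa [Int.gcd_natCast_natCast] using (hp.coprime_iff_not_dvd.mpr hpL)
  obtain ⟨u, v, huv⟩ := hcop
  set N : ℤ := n * (u * p) + (ξ : ℤ) * (v * L) with hN
  have hNp : N ≡ (ξ : ℤ) [ZMOD (p : ℤ)] := by
    have : (p : ℤ) ∣ (ξ : ℤ) - N := ⟨(ξ - n) * u, by linear_combination (-(ξ:ℤ)) * huv⟩
    exact Int.modEq_iff_dvd.mpr this
  have hNL : N ≡ n [ZMOD (L : ℤ)] := by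
    have : (L : ℤ) ∣ n - N := ⟨(n - ξ) * v, by linear_combination (-n) * huv⟩
    exact Int.modEq_iff_dvd.mpr this
  -- N ≢ 0 and N ≢ 1 mod p
  have hξ0 : ¬ N ≡ 0 [ZMOD (p : ℤ)] := by
    intro h
    have hd : (p : ℤ) ∣ 0 - (ξ : ℤ) := (hNp.symm.trans h).dvd
    have : 0 - (ξ : ℤ) = 0 := Int.eq_zero_of_abs_lt_dvd hd (by
      rw [abs_sub_lt_iff]; push_cast; omega)
    omega
  have hξ1 : ¬ N ≡ 1 [ZMOD (p : ℤ)] := by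
    intro h
    have hd : (p : ℤ) ∣ 1 - (ξ : ℤ) := (hNp.symm.trans h).dvd
    have : 1 - (ξ : ℤ) = 0 := Int.eq_zero_of_abs_lt_dvd hd (by
      rw [abs_sub_lt_iff]; push_cast; omega)
    omega
  rcases hcover N with h | h | ⟨j, hj⟩ | ⟨η, hη2, hηp, j, hjℓ, hj⟩
  · exact absurd h hξ0
  · exact absurd h hξ1
  · left
    refine ⟨j, ?_⟩
    have hdvd : ((m j : ℤ)) ∣ (L : ℤ) := by
      exact_mod_cast Dvd.dvd.mul_right (Finset.dvd_prod_of_mem m (Finset.mem_univ j)) _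
    exact ((hNL.of_dvd hdvd).symm.trans hj)
  · -- show η = ξ
    have hmod : (η : ℤ) ≡ (ξ : ℤ) [ZMOD (p : ℤ)] := by
      have h1 : N ≡ r' η j [ZMOD (p : ℤ)] :=
        hj.of_dvd (by exact_mod_cast Dvd.intro (m' η j) rfl)
      have h2 := (hm' η hη2 hηp j hjℓ).2.2
      exact (h1.trans h2).symm.trans hNp
    have hηξ : η = ξ := by
      have hd : (p : ℤ) ∣ (ξ : ℤ) - (η : ℤ) := hmod.dvd
      have : (ξ : ℤ) - (η : ℤ) = 0 := Int.eq_zero_of_abs_lt_dvd hd (by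
        rw [abs_sub_lt_iff]; push_cast; omega)
      omega
    subst hηξ
    right
    refine ⟨j, hjℓ, ?_⟩
    have hdvd : ((m' η j : ℤ)) ∣ (L : ℤ) := by
      exact_mod_cast Dvd.dvd.mul_left
        (Finset.dvd_prod_of_mem (m' η) (Finset.mem_range.mpr hjℓ)) _
    have hNm : N ≡ r' η j [ZMOD ((m' η j : ℕ) : ℤ)] :=
      hj.of_dvd (by exact_mod_cast Dvd.intro_left p rfl)
    exact (hNL.of_dvd hdvd).symm.trans hNm
end

section
/- There exists a covering system of the integers in which every modulus is odd, square-free, and greater than 1, the modulus 7 occurs exactly six times, and all other moduli are pairwise distinct and distinct from 7. -/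
/-!
The congruences `0 mod 3`, `4 mod 5`, `1, …, 6 mod 7`, `8 mod 15`, `7 mod 21`, `21 mod 35` and
`35 mod 105` cover every integer except those in the class `77 mod 105`. That class is covered
by further congruences whose moduli are distinct divisors of `3·5·7·11·13·17 = 255255`, each
divisible by one of `11, 13, 17`. All moduli divide `255255`, so they are odd and squarefree, and
covering the class `77 mod 105` is a finite check on its `2431` residues modulo `255255`.
-/

def Covers (C : List (ℤ × ℕ)) (n : ℤ) : Prop :=
  ∃ c ∈ C, n ≡ c.1 [ZMOD (c.2 : ℤ)]

instance (C : List (ℤ × ℕ)) : DecidablePred (Covers C) :=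
  fun _ => inferInstanceAs (Decidable (∃ c ∈ C, _))

namespace Covers

variable {C C' : List (ℤ × ℕ)} {L : ℕ} {m n : ℤ}

theorem mono (hC : C ⊆ C') (h : Covers C n) : Covers C' n :=
  let ⟨c, hc, hnc⟩ := h
  ⟨c, hC hc, hnc⟩

theorem of_modEq (hL : ∀ c ∈ C, c.2 ∣ L) (hnm : n ≡ m [ZMOD L]) (hm : Covers C m) :
    Covers C n :=
  let ⟨c, hc, hmc⟩ := hm
  ⟨c, hc, (hnm.of_dvd (Int.natCast_dvd_natCast.mpr (hL c hc))).trans hmc⟩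

end Covers

theorem Int.exists_natCast_lt_modEq (n : ℤ) {L : ℕ} (hL : 0 < L) :
    ∃ s : ℕ, s < L ∧ n ≡ s [ZMOD L] := by
  have hnonneg : 0 ≤ n % L := Int.emod_nonneg n (by omega)
  refine ⟨(n % L).toNat, ?_, ?_⟩
  · have : n % L < L := Int.emod_lt_of_pos n (by omega)
    omega
  · rw [Int.toNat_of_nonneg hnonneg]
    exact (Int.mod_modEq n L).symm

theorem Covers.append_of_lift {C C' : List (ℤ × ℕ)} {a b : ℕ} {r : ℤ} (ha : 0 < a) (hb : 0 < b)
    (hC : ∀ c ∈ C, c.2 ∣ a) (hC' : ∀ c ∈ C', c.2 ∣ a * b)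
    (hcov : ∀ s : ℕ, s < a → ¬ (s : ℤ) ≡ r [ZMOD a] → Covers C s)
    (hcov' : ∀ v : ℕ, v < b → Covers C' (a * v + r)) (n : ℤ) :
    Covers (C ++ C') n := by
  by_cases hnr : n ≡ r [ZMOD a]
  · obtain ⟨q, hq⟩ := hnr.symm.dvd
    obtain ⟨v, hv, hqv⟩ := Int.exists_natCast_lt_modEq q hb
    have hlift : n ≡ a * v + r [ZMOD (a * b : ℕ)] := by
      rw [show n = a * q + r by linarith, Nat.cast_mul]
      exact (hqv.mul_left' (c := (a : ℤ))).add_right r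
    exact ((hcov' v hv).of_modEq hC' hlift).mono (List.subset_append_right _ _)
  · obtain ⟨s, hs, hns⟩ := Int.exists_natCast_lt_modEq n ha
    have hsr : ¬ (s : ℤ) ≡ r [ZMOD a] := fun h => hnr (hns.trans h)
    exact ((hcov s hs hsr).of_modEq hC hns).mono (List.subset_append_left _ _)

theorem List.count_le_one_of_nodup_filter_ne {l : List ℕ} {a m : ℕ}
    (hl : (l.filter (· ≠ a)).Nodup) (hm : m ≠ a) : l.count m ≤ 1 := by
  rw [← List.count_filter (p := (· ≠ a)) (by simpa using hm)]
  exact List.nodup_iff_count_le_one.mp hl m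

def baseCongruences : List (ℤ × ℕ) :=
  [(0, 3), (4, 5), (1, 7), (2, 7), (3, 7), (4, 7), (5, 7), (6, 7), (8, 15), (7, 21), (21, 35),
    (35, 105)]

def classCongruences : List (ℤ × ℕ) :=
  [(1, 11), (11, 13), (16, 17), (32, 33), (26, 39), (8, 51), (42, 55), (12, 65), (63, 77),
    (62, 85), (21, 91), (112, 119), (123, 143), (47, 165), (5, 187), (17, 195), (53, 221),
    (161, 231), (242, 255), (98, 273), (119, 357), (77, 385), (257, 429), (252, 455), (236, 561),
    (392, 595), (404, 663), (422, 715), (82, 935), (224, 1001), (802, 1105), (182, 1155),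
    (434, 1309), (392, 1365), (1197, 1547), (182, 1785), (497, 2145), (508, 2431), (1787, 2805),
    (35, 3003), (677, 3315), (3899, 3927), (1652, 4641), (3962, 5005), (5362, 6545), (71, 7293),
    (5292, 7735), (11532, 12155), (14777, 15015), (8659, 17017), (11522, 19635), (12572, 23205),
    (30122, 36465), (46634, 51051), (23072, 85085)]

def oddSquarefreeCovering : List (ℤ × ℕ) :=
  baseCongruences ++ classCongruences

theorem baseCongruences_covers_of_not_modEq :
    ∀ s : ℕ, s < 105 → ¬ (s : ℤ) ≡ 77 [ZMOD (105 : ℕ)] → Covers baseCongruences s := by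
  decide

set_option maxRecDepth 100000 in
theorem classCongruences_covers :
    ∀ v : ℕ, v < 2431 → Covers classCongruences ((105 : ℕ) * v + 77) := by
  decide

theorem covers_oddSquarefreeCovering (n : ℤ) : Covers oddSquarefreeCovering n :=
  Covers.append_of_lift (by norm_num) (by norm_num) (by decide) (by decide)
    baseCongruences_covers_of_not_modEq classCongruences_covers n

theorem squarefree_255255 : Squarefree (255255 : ℕ) := by
  rw [Nat.squarefree_iff_nodup_primeFactorsList (by norm_num)]
  simp [Nat.primeFactorsList_ofNat]

theorem oddSquarefreeCovering_moduli :
    ∀ c ∈ oddSquarefreeCovering, 1 < c.2 ∧ c.2 ∣ 255255 := by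
  decide

theorem stmt4 :
    ∃ C : List (ℤ × ℕ),
      IsCoveringSystem C ∧
      (∀ c ∈ C, Odd c.2 ∧ Squarefree c.2 ∧ 1 < c.2) ∧
      (C.map Prod.snd).count 7 = 6 ∧
      ∀ m : ℕ, m ≠ 7 → (C.map Prod.snd).count m ≤ 1 := by
  refine ⟨oddSquarefreeCovering, ⟨fun c hc => ?_, covers_oddSquarefreeCovering⟩,
    fun c hc => ?_, by decide, fun m hm => ?_⟩
  · exact Nat.zero_lt_of_lt (oddSquarefreeCovering_moduli c hc).1
  · obtain ⟨hgt, hdvd⟩ := oddSquarefreeCovering_moduli c hc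
    exact ⟨Odd.of_dvd_nat (by decide) hdvd, squarefree_255255.squarefree_of_dvd hdvd, hgt⟩
  · exact List.count_le_one_of_nodup_filter_ne (by decide) hm
end

section
/- For every prime p ≥ 7, there exists a covering system of the integers in which every modulus is odd, square-free, and greater than 1, the modulus p occurs exactly p−1 times, and all other moduli are pairwise distinct and distinct from p. Equivalently, τ_p ≤ p−1 for all primes p ≥ 7, where τ_p is the smallest nonnegative integer t for which there exists a covering system of the integers having p as a modulus exactly t times with all other moduli odd, distinct, square-free, and greater than 1. -/
private def C7 : List (ℤ × ℕ) := [(0, 7), (1, 7), (2, 7), (3, 7), (4, 7), (5, 7), (6, 21), (1, 3), (6, 35), (3, 5), (20, 105), (2, 15), (6, 77), (2, 11), (20, 231), (5, 33), (34, 385), (19, 55), (1049, 1155), (44, 165), (6, 91), (0, 13), (20, 273), (14, 39), (34, 455), (54, 65), (1049, 1365), (29, 195), (153, 1001), (43, 143), (2078, 3003), (395, 429), (5004, 5005), (674, 715), (1994, 15015), (1169, 2145), (6, 119), (13, 17), (20, 357), (44, 51), (34, 595), (24, 85), (524, 1785), (89, 255), (62, 1309), (18, 187), (3527, 3927), (491,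 561), (4374, 6545), (29, 935), (14384, 19635), (689, 2805), (1252, 1547), (69, 221), (3527, 4641), (134, 663), (7349, 7735), (199, 1105), (1889, 23205), (2474, 3315), (6068, 17017), (1954, 2431), (9995, 51051), (1019, 7293), (30939, 85085), (10794, 12155), (6, 133), (13, 19), (20, 399), (8, 57), (34, 665), (79, 95), (314, 1995), (74, 285), (993, 1463), (69, 209), (608, 4389), (311, 627), (3149, 7315), (344, 1045), (10079, 21945), (1004, 3135), (517, 1729), (49, 247), (2792, 5187)]

private theorem memCov {C : List (ℤ × ℕ)} {n : ℤ} (r : ℤ) (M : ℕ) (h1 : (r, M) ∈ C)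
    (h2 : n % (M : ℤ) = r % (M : ℤ)) : ∃ c ∈ C, n ≡ c.1 [ZMOD (c.2 : ℤ)] := ⟨(r, M), h1, h2⟩

private theorem cov7 (n : ℤ) : ∃ c ∈ C7, n ≡ c.1 [ZMOD (c.2 : ℤ)] := by
  have h7 : n % 7 = 0 ∨ n % 7 = 1 ∨ n % 7 = 2 ∨ n % 7 = 3 ∨ n % 7 = 4 ∨ n % 7 = 5 ∨ n % 7 = 6 := by omega
  rcases h7 with h|h|h|h|h|h|h
  · exact memCov 0 7 (by decide) (by omega)
  · exact memCov 1 7 (by decide) (by omega)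
  · exact memCov 2 7 (by decide) (by omega)
  · exact memCov 3 7 (by decide) (by omega)
  · exact memCov 4 7 (by decide) (by omega)
  · exact memCov 5 7 (by decide) (by omega)
  obtain ⟨t, rfl⟩ : ∃ t : ℤ, n = 7 * t + 6 := ⟨n / 7, by omega⟩
  have h : t % 1 = 0 := by omega
  have h' : t % 15 = 0 ∨ t % 15 = 1 ∨ t % 15 = 2 ∨ t % 15 = 3 ∨ t % 15 = 4 ∨ t % 15 = 5 ∨ t % 15 = 6 ∨ t % 15 = 7 ∨ t % 15 = 8 ∨ t % 15 = 9 ∨ t % 15 = 10 ∨ t % 15 = 11 ∨ t % 15 = 12 ∨ t % 15 = 13 ∨ t % 15 = 14 := by omega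
  clear h
  rcases h' with h|h|h|h|h|h|h|h|h|h|h|h|h|h|h
  · exact memCov 6 21 (by decide) (by omega)
  · exact memCov 1 3 (by decide) (by omega)
  · exact memCov 20 105 (by decide) (by omega)
  · exact memCov 6 21 (by decide) (by omega)
  · exact memCov 1 3 (by decide) (by omega)
  · exact memCov 6 35 (by decide) (by omega)
  · exact memCov 6 21 (by decide) (by omega)
  · exact memCov 1 3 (by decide) (by omega)
  · exact memCov 2 15 (by decide) (by omega)
  · exact memCov 6 21 (by decide) (by omega)
  · exact memCov 1 3 (by decide) (by omega)
  · exact memCov 3 5 (by decide) (by omega)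
  · exact memCov 6 21 (by decide) (by omega)
  · exact memCov 1 3 (by decide) (by omega)
  · -- continue cell 14 mod 15
    have h' : t % 165 = 14 ∨ t % 165 = 29 ∨ t % 165 = 44 ∨ t % 165 = 59 ∨ t % 165 = 74 ∨ t % 165 = 89 ∨ t % 165 = 104 ∨ t % 165 = 119 ∨ t % 165 = 134 ∨ t % 165 = 149 ∨ t % 165 = 164 := by omega
    clear h
    rcases h' with h|h|h|h|h|h|h|h|h|h|h
    · exact memCov 5 33 (by decide) (by omega)
    · exact memCov 44 165 (by decide) (by omega)
    · exact memCov 6 77 (by decide) (by omega)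
    · exact memCov 34 385 (by decide) (by omega)
    · -- continue cell 74 mod 165
      have h' : t % 2805 = 74 ∨ t % 2805 = 239 ∨ t % 2805 = 404 ∨ t % 2805 = 569 ∨ t % 2805 = 734 ∨ t % 2805 = 899 ∨ t % 2805 = 1064 ∨ t % 2805 = 1229 ∨ t % 2805 = 1394 ∨ t % 2805 = 1559 ∨ t % 2805 = 1724 ∨ t % 2805 = 1889 ∨ t % 2805 = 2054 ∨ t % 2805 = 2219 ∨ t % 2805 = 2384 ∨ t % 2805 = 2549 ∨ t % 2805 = 2714 := by omega
      clear h
      rcases h' with h|h|h|h|h|h|h|h|h|h|h|h|h|h|h|h|h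
      · exact memCov 524 1785 (by decide) (by omega)
      · exact memCov 13 17 (by decide) (by omega)
      · exact memCov 29 935 (by decide) (by omega)
      · exact memCov 62 1309 (by decide) (by omega)
      · exact memCov 44 51 (by decide) (by omega)
      · exact memCov 689 2805 (by decide) (by omega)
      · exact memCov 3527 3927 (by decide) (by omega)
      · exact memCov 24 85 (by decide) (by omega)
      · exact memCov 6 119 (by decide) (by omega)
      · exact memCov 4374 6545 (by decide) (by omega)
      · exact memCov 89 255 (by decide) (by omega)
      · exact memCov 20 357 (by decide) (by omega)
      · exact memCov 14384 19635 (by decide) (by omega)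
      · exact memCov 18 187 (by decide) (by omega)
      · exact memCov 34 595 (by decide) (by omega)
      · -- continue cell 2549 mod 2805
        have h' : t % 36465 = 2549 ∨ t % 36465 = 5354 ∨ t % 36465 = 8159 ∨ t % 36465 = 10964 ∨ t % 36465 = 13769 ∨ t % 36465 = 16574 ∨ t % 36465 = 19379 ∨ t % 36465 = 22184 ∨ t % 36465 = 24989 ∨ t % 36465 = 27794 ∨ t % 36465 = 30599 ∨ t % 36465 = 33404 ∨ t % 36465 = 36209 := by omega
        clear h
        rcases h' with h|h|h|h|h|h|h|h|h|h|h|h|h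
        · exact memCov 0 13 (by decide) (by omega)
        · exact memCov 1019 7293 (by decide) (by omega)
        · exact memCov 6068 17017 (by decide) (by omega)
        · exact memCov 54 65 (by decide) (by omega)
        · exact memCov 20 273 (by decide) (by omega)
        · exact memCov 30939 85085 (by decide) (by omega)
        · exact memCov 1954 2431 (by decide) (by omega)
        · exact memCov 1049 1365 (by decide) (by omega)
        · exact memCov 14 39 (by decide) (by omega)
        · exact memCov 6 91 (by decide) (by omega)
        · exact memCov 9995 51051 (by decide) (by omega)
        · exact memCov 29 195 (by decide) (by omega)
        · exact memCov 34 455 (by decide) (by omega)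
      · exact memCov 491 561 (by decide) (by omega)
    · exact memCov 2 11 (by decide) (by omega)
    · exact memCov 19 55 (by decide) (by omega)
    · -- continue cell 119 mod 165
      have h' : t % 2145 = 119 ∨ t % 2145 = 284 ∨ t % 2145 = 449 ∨ t % 2145 = 614 ∨ t % 2145 = 779 ∨ t % 2145 = 944 ∨ t % 2145 = 1109 ∨ t % 2145 = 1274 ∨ t % 2145 = 1439 ∨ t % 2145 = 1604 ∨ t % 2145 = 1769 ∨ t % 2145 = 1934 ∨ t % 2145 = 2099 := by omega
      clear h
      rcases h' with h|h|h|h|h|h|h|h|h|h|h|h|h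
      · exact memCov 20 273 (by decide) (by omega)
      · exact memCov 1994 15015 (by decide) (by omega)
      · exact memCov 29 195 (by decide) (by omega)
      · exact memCov 14 39 (by decide) (by omega)
      · exact memCov 1169 2145 (by decide) (by omega)
      · -- continue cell 944 mod 2145
        have h' : t % 40755 = 944 ∨ t % 40755 = 3089 ∨ t % 40755 = 5234 ∨ t % 40755 = 7379 ∨ t % 40755 = 9524 ∨ t % 40755 = 11669 ∨ t % 40755 = 13814 ∨ t % 40755 = 15959 ∨ t % 40755 = 18104 ∨ t % 40755 = 20249 ∨ t % 40755 = 22394 ∨ t % 40755 = 24539 ∨ t % 40755 = 26684 ∨ t % 40755 = 28829 ∨ t % 40755 = 30974 ∨ t % 40755 = 33119 ∨ t % 40755 = 35264 ∨ t % 40755 = 37409 ∨ t % 40755 = 39554 := by omega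
        clear h
        rcases h' with h|h|h|h|h|h|h|h|h|h|h|h|h|h|h|h|h|h|h
        · exact memCov 344 1045 (by decide) (by omega)
        · exact memCov 311 627 (by decide) (by omega)
        · exact memCov 69 209 (by decide) (by omega)
        · exact memCov 74 285 (by decide) (by omega)
        · exact memCov 79 95 (by decide) (by omega)
        · exact memCov 8 57 (by decide) (by omega)
        · exact memCov 13 19 (by decide) (by omega)
        · exact memCov 2792 5187 (by decide) (by omega)
        · exact memCov 517 1729 (by decide) (by omega)
        · exact memCov 10079 21945 (by decide) (by omega)
        · exact memCov 3149 7315 (by decide) (by omega)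
        · exact memCov 608 4389 (by decide) (by omega)
        · exact memCov 993 1463 (by decide) (by omega)
        · exact memCov 314 1995 (by decide) (by omega)
        · exact memCov 34 665 (by decide) (by omega)
        · exact memCov 20 399 (by decide) (by omega)
        · exact memCov 6 133 (by decide) (by omega)
        · exact memCov 49 247 (by decide) (by omega)
        · exact memCov 1004 3135 (by decide) (by omega)
      · exact memCov 34 455 (by decide) (by omega)
      · exact memCov 6 91 (by decide) (by omega)
      · -- continue cell 1439 mod 2145
        have h' : t % 36465 = 1439 ∨ t % 36465 = 3584 ∨ t % 36465 = 5729 ∨ t % 36465 = 7874 ∨ t % 36465 = 10019 ∨ t % 36465 = 12164 ∨ t % 36465 = 14309 ∨ t % 36465 = 16454 ∨ t % 36465 = 18599 ∨ t % 36465 = 20744 ∨ t % 36465 = 22889 ∨ t % 36465 = 25034 ∨ t % 36465 = 27179 ∨ t % 36465 = 29324 ∨ t % 36465 = 31469 ∨ t % 36465 = 33614 ∨ t % 36465 = 35759 := by omega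
        clear h
        rcases h' with h|h|h|h|h|h|h|h|h|h|h|h|h|h|h|h|h
        · exact memCov 134 663 (by decide) (by omega)
        · exact memCov 1889 23205 (by decide) (by omega)
        · exact memCov 6 119 (by decide) (by omega)
        · exact memCov 44 51 (by decide) (by omega)
        · exact memCov 524 1785 (by decide) (by omega)
        · exact memCov 69 221 (by decide) (by omega)
        · exact memCov 7349 7735 (by decide) (by omega)
        · exact memCov 2474 3315 (by decide) (by omega)
        · exact memCov 13 17 (by decide) (by omega)
        · exact memCov 34 595 (by decide) (by omega)
        · exact memCov 89 255 (by decide) (by omega)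
        · exact memCov 3527 4641 (by decide) (by omega)
        · exact memCov 199 1105 (by decide) (by omega)
        · exact memCov 10794 12155 (by decide) (by omega)
        · exact memCov 20 357 (by decide) (by omega)
        · exact memCov 24 85 (by decide) (by omega)
        · exact memCov 1252 1547 (by decide) (by omega)
      · exact memCov 54 65 (by decide) (by omega)
      · exact memCov 0 13 (by decide) (by omega)
      · exact memCov 674 715 (by decide) (by omega)
      · exact memCov 1049 1365 (by decide) (by omega)
    · exact memCov 20 231 (by decide) (by omega)
    · exact memCov 1049 1155 (by decide) (by omega)
    · -- continue cell 164 mod 165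
      have h' : t % 2145 = 164 ∨ t % 2145 = 329 ∨ t % 2145 = 494 ∨ t % 2145 = 659 ∨ t % 2145 = 824 ∨ t % 2145 = 989 ∨ t % 2145 = 1154 ∨ t % 2145 = 1319 ∨ t % 2145 = 1484 ∨ t % 2145 = 1649 ∨ t % 2145 = 1814 ∨ t % 2145 = 1979 ∨ t % 2145 = 2144 := by omega
      clear h
      rcases h' with h|h|h|h|h|h|h|h|h|h|h|h|h
      · exact memCov 153 1001 (by decide) (by omega)
      · exact memCov 34 455 (by decide) (by omega)
      · exact memCov 6 91 (by decide) (by omega)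
      · exact memCov 43 143 (by decide) (by omega)
      · exact memCov 54 65 (by decide) (by omega)
      · exact memCov 0 13 (by decide) (by omega)
      · exact memCov 2078 3003 (by decide) (by omega)
      · exact memCov 1049 1365 (by decide) (by omega)
      · exact memCov 20 273 (by decide) (by omega)
      · exact memCov 395 429 (by decide) (by omega)
      · exact memCov 29 195 (by decide) (by omega)
      · exact memCov 14 39 (by decide) (by omega)
      · exact memCov 5004 5005 (by decide) (by omega)

private theorem sq4849845 : Squarefree (4849845 : ℕ) := by
  rw [show (4849845 : ℕ) = 3 * (5 * (7 * (11 * (13 * (17 * 19))))) from by norm_num]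
  refine (Nat.squarefree_mul (by norm_num)).mpr ⟨(by norm_num : Nat.Prime 3).squarefree, ?_⟩
  refine (Nat.squarefree_mul (by norm_num)).mpr ⟨(by norm_num : Nat.Prime 5).squarefree, ?_⟩
  refine (Nat.squarefree_mul (by norm_num)).mpr ⟨(by norm_num : Nat.Prime 7).squarefree, ?_⟩
  refine (Nat.squarefree_mul (by norm_num)).mpr ⟨(by norm_num : Nat.Prime 11).squarefree, ?_⟩
  refine (Nat.squarefree_mul (by norm_num)).mpr ⟨(by norm_num : Nat.Prime 13).squarefree, ?_⟩
  exact (Nat.squarefree_mul (by norm_num)).mpr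
    ⟨(by norm_num : Nat.Prime 17).squarefree, (by norm_num : Nat.Prime 19).squarefree⟩

private theorem memCov' {C : List (ℤ × ℕ)} {n : ℤ} (r : ℤ) (M : ℕ) (h1 : (r, M) ∈ C)
    (h2 : (M : ℤ) ∣ r - n) : ∃ c ∈ C, n ≡ c.1 [ZMOD (c.2 : ℤ)] :=
  ⟨(r, M), h1, Int.modEq_iff_dvd.mpr h2⟩

private theorem general_case (p : ℕ) (hp : p.Prime) (hp11 : 11 ≤ p) :
    ∃ C : List (ℤ × ℕ),
      IsCoveringSystem C ∧
      (∀ c ∈ C, Odd c.2 ∧ Squarefree c.2 ∧ 1 < c.2) ∧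
      (C.map Prod.snd).count p = p - 1 ∧
      ∀ m : ℕ, m ≠ p → (C.map Prod.snd).count m ≤ 1 := by
  have hp1 : 1 < p := hp.one_lt
  have hne15 : p ≠ 15 := by rintro rfl; norm_num at hp
  have hne21 : p ≠ 21 := by rintro rfl; norm_num at hp
  have hne35 : p ≠ 35 := by rintro rfl; norm_num at hp
  have hne105 : p ≠ 105 := by rintro rfl; norm_num at hp
  have hnd105 : ¬ p ∣ 105 := by
    intro hdvd
    rw [show (105 : ℕ) = 3 * 35 from by norm_num] at hdvd
    rcases (Nat.Prime.dvd_mul hp).mp hdvd with h | h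
    · exact absurd (Nat.le_of_dvd (by norm_num) h) (by omega)
    · rw [show (35 : ℕ) = 5 * 7 from by norm_num] at h
      rcases (Nat.Prime.dvd_mul hp).mp h with h | h <;>
        exact absurd (Nat.le_of_dvd (by norm_num) h) (by omega)
  have hcop : Nat.Coprime 105 p := ((Nat.Prime.coprime_iff_not_dvd hp).mpr hnd105).symm
  have hsq105 : Squarefree (105 : ℕ) := by
    rw [show (105 : ℕ) = 3 * (5 * 7) from by norm_num]
    refine (Nat.squarefree_mul (by norm_num)).mpr ⟨(by norm_num : Nat.Prime 3).squarefree, ?_⟩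
    exact (Nat.squarefree_mul (by norm_num)).mpr ⟨(by norm_num : Nat.Prime 5).squarefree, (by norm_num : Nat.Prime 7).squarefree⟩
  have hsqf : Squarefree (105 * p) := (Nat.squarefree_mul hcop).mpr ⟨hsq105, hp.squarefree⟩
  have hoddp : Odd p := hp.odd_of_ne_two (by omega)
  have hodd105p : Odd (105 * p) := Nat.odd_mul.mpr ⟨by decide, hoddp⟩
  refine ⟨(List.range (p - 1)).map (fun i : ℕ => ((i : ℤ), p)) ++
    [(-1, 3), ((p:ℤ) - 1, 3 * p), (-1, 5), ((p:ℤ) - 1, 5 * p), (2 * (p:ℤ) - 1, 15), (8 * (p:ℤ) - 1, 15 * p), (-1, 7), ((p:ℤ) - 1, 7 * p), (2 * (p:ℤ) - 1, 21), (17 * (p:ℤ) - 1, 21 * p), (4 * (p:ℤ) - 1, 35), (19 * (p:ℤ) - 1, 35 * p), (104 * (p:ℤ) - 1, 105)], ?_, ?_, ?_, ?_⟩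
  · constructor
    · intro c hc
      rcases List.mem_append.mp hc with h | h
      · obtain ⟨i, _, rfl⟩ := List.mem_map.mp h
        exact hp.pos
      · fin_cases h <;> simp <;> omega
    · intro n
      by_cases hr : n % (p : ℤ) = (p : ℤ) - 1
      · obtain ⟨u, hu⟩ : ∃ u : ℤ, n = (p : ℤ) * u - 1 := by
          refine ⟨n / (p : ℤ) + 1, ?_⟩
          have h := Int.mul_ediv_add_emod n (p : ℤ)
          rw [hr] at h
          linear_combination -h
        have h15 : u % 15 = 0 ∨ u % 15 = 1 ∨ u % 15 = 2 ∨ u % 15 = 3 ∨ u % 15 = 4 ∨ u % 15 = 5 ∨ u % 15 = 6 ∨ u % 15 = 7 ∨ u % 15 = 8 ∨ u % 15 = 9 ∨ u % 15 = 10 ∨ u % 15 = 11 ∨ u % 15 = 12 ∨ u % 15 = 13 ∨ u % 15 = 14 := by omega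
        rcases h15 with h|h|h|h|h|h|h|h|h|h|h|h|h|h|h
        · obtain ⟨k, hk⟩ : ∃ k : ℤ, u = 15 * k + 0 := ⟨u / 15, by omega⟩
          exact memCov' (-1) (3) (List.mem_append_right _ (by simp)) ⟨((p:ℤ) * (-((5:ℤ) * k + 0))), by rw [hu, hk]; push_cast; ring⟩
        · obtain ⟨k, hk⟩ : ∃ k : ℤ, u = 15 * k + 1 := ⟨u / 15, by omega⟩
          exact memCov' ((p:ℤ) - 1) (3 * p) (List.mem_append_right _ (by simp)) ⟨(-((5:ℤ) * k + 0)), by rw [hu, hk]; push_cast; ring⟩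
        · obtain ⟨k, hk⟩ : ∃ k : ℤ, u = 15 * k + 2 := ⟨u / 15, by omega⟩
          exact memCov' (2 * (p:ℤ) - 1) (15) (List.mem_append_right _ (by simp)) ⟨((p:ℤ) * (-((1:ℤ) * k + 0))), by rw [hu, hk]; push_cast; ring⟩
        · obtain ⟨k, hk⟩ : ∃ k : ℤ, u = 15 * k + 3 := ⟨u / 15, by omega⟩
          exact memCov' (-1) (3) (List.mem_append_right _ (by simp)) ⟨((p:ℤ) * (-((5:ℤ) * k + 1))), by rw [hu, hk]; push_cast; ring⟩
        · obtain ⟨k, hk⟩ : ∃ k : ℤ, u = 15 * k + 4 := ⟨u / 15, by omega⟩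
          exact memCov' ((p:ℤ) - 1) (3 * p) (List.mem_append_right _ (by simp)) ⟨(-((5:ℤ) * k + 1)), by rw [hu, hk]; push_cast; ring⟩
        · obtain ⟨k, hk⟩ : ∃ k : ℤ, u = 15 * k + 5 := ⟨u / 15, by omega⟩
          exact memCov' (-1) (5) (List.mem_append_right _ (by simp)) ⟨((p:ℤ) * (-((3:ℤ) * k + 1))), by rw [hu, hk]; push_cast; ring⟩
        · obtain ⟨k, hk⟩ : ∃ k : ℤ, u = 15 * k + 6 := ⟨u / 15, by omega⟩
          exact memCov' (-1) (3) (List.mem_append_right _ (by simp)) ⟨((p:ℤ) * (-((5:ℤ) * k + 2))), by rw [hu, hk]; push_cast; ring⟩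
        · obtain ⟨k, hk⟩ : ∃ k : ℤ, u = 15 * k + 7 := ⟨u / 15, by omega⟩
          exact memCov' ((p:ℤ) - 1) (3 * p) (List.mem_append_right _ (by simp)) ⟨(-((5:ℤ) * k + 2)), by rw [hu, hk]; push_cast; ring⟩
        · obtain ⟨k, hk⟩ : ∃ k : ℤ, u = 15 * k + 8 := ⟨u / 15, by omega⟩
          exact memCov' (8 * (p:ℤ) - 1) (15 * p) (List.mem_append_right _ (by simp)) ⟨(-((1:ℤ) * k + 0)), by rw [hu, hk]; push_cast; ring⟩
        · obtain ⟨k, hk⟩ : ∃ k : ℤ, u = 15 * k + 9 := ⟨u / 15, by omega⟩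
          exact memCov' (-1) (3) (List.mem_append_right _ (by simp)) ⟨((p:ℤ) * (-((5:ℤ) * k + 3))), by rw [hu, hk]; push_cast; ring⟩
        · obtain ⟨k, hk⟩ : ∃ k : ℤ, u = 15 * k + 10 := ⟨u / 15, by omega⟩
          exact memCov' ((p:ℤ) - 1) (3 * p) (List.mem_append_right _ (by simp)) ⟨(-((5:ℤ) * k + 3)), by rw [hu, hk]; push_cast; ring⟩
        · obtain ⟨k, hk⟩ : ∃ k : ℤ, u = 15 * k + 11 := ⟨u / 15, by omega⟩
          exact memCov' ((p:ℤ) - 1) (5 * p) (List.mem_append_right _ (by simp)) ⟨(-((3:ℤ) * k + 2)), by rw [hu, hk]; push_cast; ring⟩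
        · obtain ⟨k, hk⟩ : ∃ k : ℤ, u = 15 * k + 12 := ⟨u / 15, by omega⟩
          exact memCov' (-1) (3) (List.mem_append_right _ (by simp)) ⟨((p:ℤ) * (-((5:ℤ) * k + 4))), by rw [hu, hk]; push_cast; ring⟩
        · obtain ⟨k, hk⟩ : ∃ k : ℤ, u = 15 * k + 13 := ⟨u / 15, by omega⟩
          exact memCov' ((p:ℤ) - 1) (3 * p) (List.mem_append_right _ (by simp)) ⟨(-((5:ℤ) * k + 4)), by rw [hu, hk]; push_cast; ring⟩
        · have h105 : u % 105 = 14 ∨ u % 105 = 29 ∨ u % 105 = 44 ∨ u % 105 = 59 ∨ u % 105 = 74 ∨ u % 105 = 89 ∨ u % 105 = 104 := by omega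
          rcases h105 with h|h|h|h|h|h|h
          · obtain ⟨k, hk⟩ : ∃ k : ℤ, u = 105 * k + 14 := ⟨u / 105, by omega⟩
            exact memCov' (-1) (7) (List.mem_append_right _ (by simp)) ⟨((p:ℤ) * (-((15:ℤ) * k + 2))), by rw [hu, hk]; push_cast; ring⟩
          · obtain ⟨k, hk⟩ : ∃ k : ℤ, u = 105 * k + 29 := ⟨u / 105, by omega⟩
            exact memCov' ((p:ℤ) - 1) (7 * p) (List.mem_append_right _ (by simp)) ⟨(-((15:ℤ) * k + 4)), by rw [hu, hk]; push_cast; ring⟩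
          · obtain ⟨k, hk⟩ : ∃ k : ℤ, u = 105 * k + 44 := ⟨u / 105, by omega⟩
            exact memCov' (2 * (p:ℤ) - 1) (21) (List.mem_append_right _ (by simp)) ⟨((p:ℤ) * (-((5:ℤ) * k + 2))), by rw [hu, hk]; push_cast; ring⟩
          · obtain ⟨k, hk⟩ : ∃ k : ℤ, u = 105 * k + 59 := ⟨u / 105, by omega⟩
            exact memCov' (17 * (p:ℤ) - 1) (21 * p) (List.mem_append_right _ (by simp)) ⟨(-((5:ℤ) * k + 2)), by rw [hu, hk]; push_cast; ring⟩
          · obtain ⟨k, hk⟩ : ∃ k : ℤ, u = 105 * k + 74 := ⟨u / 105, by omega⟩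
            exact memCov' (4 * (p:ℤ) - 1) (35) (List.mem_append_right _ (by simp)) ⟨((p:ℤ) * (-((3:ℤ) * k + 2))), by rw [hu, hk]; push_cast; ring⟩
          · obtain ⟨k, hk⟩ : ∃ k : ℤ, u = 105 * k + 89 := ⟨u / 105, by omega⟩
            exact memCov' (19 * (p:ℤ) - 1) (35 * p) (List.mem_append_right _ (by simp)) ⟨(-((3:ℤ) * k + 2)), by rw [hu, hk]; push_cast; ring⟩
          · obtain ⟨k, hk⟩ : ∃ k : ℤ, u = 105 * k + 104 := ⟨u / 105, by omega⟩
            exact memCov' (104 * (p:ℤ) - 1) (105) (List.mem_append_right _ (by simp)) ⟨((p:ℤ) * (-((1:ℤ) * k + 0))), by rw [hu, hk]; push_cast; ring⟩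
      · have hppos : (0 : ℤ) < (p : ℤ) := by exact_mod_cast hp.pos
        have h0 : 0 ≤ n % (p : ℤ) := Int.emod_nonneg n (ne_of_gt hppos)
        have h1 : n % (p : ℤ) < (p : ℤ) := Int.emod_lt_of_pos n hppos
        have hlt : (n % (p : ℤ)).toNat < p - 1 := by omega
        have heq : ((((n % (p : ℤ)).toNat : ℕ) : ℤ), p) = (n % (p : ℤ), p) := by
          rw [Int.toNat_of_nonneg h0]
        refine ⟨(n % (p : ℤ), p), List.mem_append_left _
          (List.mem_map.mpr ⟨(n % (p : ℤ)).toNat, List.mem_range.mpr hlt, heq⟩),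
          (Int.emod_emod_of_dvd n dvd_rfl).symm⟩
  · intro c hc
    have hdvd : c.2 ∣ 105 * p ∧ 1 < c.2 := by
      rcases List.mem_append.mp hc with h | h
      · obtain ⟨i, _, rfl⟩ := List.mem_map.mp h
        exact ⟨⟨105, by ring⟩, hp.one_lt⟩
      · fin_cases h
        · exact ⟨⟨35 * p, by ring⟩, by norm_num⟩
        · exact ⟨⟨35, by ring⟩, by omega⟩
        · exact ⟨⟨21 * p, by ring⟩, by norm_num⟩
        · exact ⟨⟨21, by ring⟩, by omega⟩
        · exact ⟨⟨7 * p, by ring⟩, by norm_num⟩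
        · exact ⟨⟨7, by ring⟩, by omega⟩
        · exact ⟨⟨15 * p, by ring⟩, by norm_num⟩
        · exact ⟨⟨15, by ring⟩, by omega⟩
        · exact ⟨⟨5 * p, by ring⟩, by norm_num⟩
        · exact ⟨⟨5, by ring⟩, by omega⟩
        · exact ⟨⟨3 * p, by ring⟩, by norm_num⟩
        · exact ⟨⟨3, by ring⟩, by omega⟩
        · exact ⟨⟨p, by ring⟩, by norm_num⟩
    have hodd : Odd c.2 := by
      obtain ⟨k, hk⟩ := hdvd.1
      have h2 : Odd (c.2 * k) := hk ▸ hodd105p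
      exact (Nat.odd_mul.mp h2).1
    exact ⟨hodd, Squarefree.squarefree_of_dvd hdvd.1 hsqf, hdvd.2⟩
  · rw [List.map_append, List.count_append]
    have e1 : ((List.range (p - 1)).map (fun i : ℕ => ((i : ℤ), p))).map Prod.snd
        = List.replicate (p - 1) p := by
      rw [List.map_map]
      refine List.eq_replicate_iff.mpr ⟨by simp, fun b hb => ?_⟩
      obtain ⟨i, _, rfl⟩ := List.mem_map.mp hb
      rfl
    rw [e1]
    have e2 : (([(-1, 3), ((p:ℤ) - 1, 3 * p), (-1, 5), ((p:ℤ) - 1, 5 * p), (2 * (p:ℤ) - 1, 15), (8 * (p:ℤ) - 1, 15 * p), (-1, 7), ((p:ℤ) - 1, 7 * p), (2 * (p:ℤ) - 1, 21), (17 * (p:ℤ) - 1, 21 * p), (4 * (p:ℤ) - 1, 35), (19 * (p:ℤ) - 1, 35 * p), (104 * (p:ℤ) - 1, 105)] : List (ℤ × ℕ)).map Prod.snd).count p = 0 := by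
      rw [List.count_eq_zero]
      intro hmem
      simp at hmem
      omega
    rw [e2, List.count_replicate_self]
    omega
  · intro m hm
    rw [List.map_append, List.count_append]
    have e1 : ((List.range (p - 1)).map (fun i : ℕ => ((i : ℤ), p))).map Prod.snd
        = List.replicate (p - 1) p := by
      rw [List.map_map]
      refine List.eq_replicate_iff.mpr ⟨by simp, fun b hb => ?_⟩
      obtain ⟨i, _, rfl⟩ := List.mem_map.mp hb
      rfl
    rw [e1]
    have e2 : (List.replicate (p - 1) p).count m = 0 := by
      rw [List.count_replicate]
      simp [Ne.symm hm]
    have hnd : (([(-1, 3), ((p:ℤ) - 1, 3 * p), (-1, 5), ((p:ℤ) - 1, 5 * p), (2 * (p:ℤ) - 1, 15), (8 * (p:ℤ) - 1, 15 * p), (-1, 7), ((p:ℤ) - 1, 7 * p), (2 * (p:ℤ) - 1, 21), (17 * (p:ℤ) - 1, 21 * p), (4 * (p:ℤ) - 1, 35), (19 * (p:ℤ) - 1, 35 * p), (104 * (p:ℤ) - 1, 105)] : List (ℤ × ℕ)).map Prod.snd).Nodup := by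
      simp [List.nodup_cons]
      omega
    have := List.nodup_iff_count_le_one.mp hnd m
    omega

theorem stmt8 (p : ℕ) (hp : p.Prime) (hp7 : 7 ≤ p) :
    ∃ C : List (ℤ × ℕ),
      IsCoveringSystem C ∧
      (∀ c ∈ C, Odd c.2 ∧ Squarefree c.2 ∧ 1 < c.2) ∧
      (C.map Prod.snd).count p = p - 1 ∧
      ∀ m : ℕ, m ≠ p → (C.map Prod.snd).count m ≤ 1 := by
  have hcase : p = 7 ∨ 11 ≤ p := by
    rcases Nat.lt_or_ge p 11 with h | h
    · interval_cases p
      · exact Or.inl rfl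
      · exact absurd hp (by norm_num)
      · exact absurd hp (by norm_num)
      · exact absurd hp (by norm_num)
    · exact Or.inr h
  rcases hcase with rfl | hp11
  · refine ⟨C7, ⟨by decide, cov7⟩, ?_, by decide, ?_⟩
    · have key : ∀ c ∈ C7, c.2 ∣ 4849845 ∧ c.2 % 2 = 1 ∧ 1 < c.2 := by decide
      intro c hc
      obtain ⟨h1, h2, h3⟩ := key c hc
      exact ⟨Nat.odd_iff.mpr h2, Squarefree.squarefree_of_dvd h1 sq4849845, h3⟩
    · intro m hm
      have he : C7.map Prod.snd = [7, 7, 7, 7, 7, 7] ++ [21, 3, 35, 5, 105, 15, 77, 11, 231, 33, 385, 55, 1155, 165, 91, 13, 273, 39, 455, 65, 1365, 195, 1001, 143, 3003, 429, 5005, 715, 15015, 2145, 119, 17, 357, 51, 595, 85, 1785, 255, 1309, 187, 3927, 561, 6545, 935, 19635, 2805, 1547, 221, 4641, 663, 7735, 1105, 23205, 3315, 17017, 2431, 51051, 7293, 85085, 12155, 133, 19, 399, 57, 665, 95, 1995, 285, 1463, 209, 4389, 627, 7315, 1045, 21945, 3135, 1729, 247, 5187] := by rfl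
      rw [he, List.count_append]
      have h1 : ([7, 7, 7, 7, 7, 7] : List ℕ).count m = 0 := by
        rw [List.count_eq_zero]
        simp [hm]
      have hnd : ([21, 3, 35, 5, 105, 15, 77, 11, 231, 33, 385, 55, 1155, 165, 91, 13, 273, 39, 455, 65, 1365, 195, 1001, 143, 3003, 429, 5005, 715, 15015, 2145, 119, 17, 357, 51, 595, 85, 1785, 255, 1309, 187, 3927, 561, 6545, 935, 19635, 2805, 1547, 221, 4641, 663, 7735, 1105, 23205, 3315, 17017, 2431, 51051, 7293, 85085, 12155, 133, 19, 399, 57, 665, 95, 1995, 285, 1463, 209, 4389, 627, 7315, 1045, 21945, 3135, 1729, 247, 5187] : List ℕ).Nodup := by decide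
      have h2 := List.nodup_iff_count_le_one.mp hnd m
      omega
  · exact general_case p hp hp11
end
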